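/- arXiv:1706.01786 — 6 statements merged into one kernel-verified Lean document; each statement's English description precedes it below -/
import Mathlib

section
/- Let (u_l)_{l≥0} and b = (b_l)_{l≥0} be real sequences. For all integers j ≥ 0 and n ≥ 1, the following determinant identity holds: f^{(j)}_n(b) · H^{(j+1)}_{n−1} = f^{(j+1)}_{n−1}(b) · H^{(j)}_n − f^{(j)}_{n−1}(b) · H^{(j+1)}_n. -/
/-!
The identity is the Desnanot–Jacobi identity for the matrix `M` of `f^{(j)}_n(b)`, with the first
and last rows and the last two columns of `M` deleted: the other five determinants are the
corresponding minors of `M`.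

Desnanot–Jacobi itself: multiplying `A` by the identity matrix whose last two columns are replaced
by the columns `0` and `last` of `adjugate A` gives `A` with those columns replaced by
`det A • e₀` and `det A • e_last`. Comparing determinants gives `det A` times the identity, and
`det A` cancels when it is a non-zero-divisor. The general case follows by applying this to
`charmatrix (-A)`, whose determinant is monic, and evaluating at `0`.
-/

/-- `hankel u j n` = the Hankel determinant `H^{(j)}_n = det (u_{j+i+k})_{0 ≤ i,k ≤ n-1}`
(with `H^{(j)}_0 = 1`, the determinant of the empty matrix). -/
noncomputable def hankel (u : ℕ → ℝ) (j n : ℕ) : ℝ :=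
  Matrix.det (Matrix.of fun i k : Fin n => u (j + i + k))

/-- `fdet u b j n` = the determinant `f^{(j)}_n(b)`: determinant of the
`(n+1)×(n+1)` matrix whose entry in row `i` and column `k` (`0 ≤ k ≤ n-1`)
is `u (j+i+k)` and whose last column has entries `b (j+i)`. -/
noncomputable def fdet (u b : ℕ → ℝ) (j n : ℕ) : ℝ :=
  Matrix.det (Matrix.of fun i k : Fin (n + 1) =>
    if (k : ℕ) < n then u (j + i + k) else b (j + i))

namespace Matrix

theorem submatrix_updateCol_of_injective {α l n o : Type*} [DecidableEq n] [DecidableEq o]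
    (A : Matrix l n α) {f : o → l} {g : o → n} (hg : g.Injective) (c : o) (v : l → α) :
    (A.updateCol (g c) v).submatrix f g = (A.submatrix f g).updateCol c (v ∘ f) := by
  ext i k
  obtain rfl | hk := eq_or_ne k c
  · simp
  · simp [hk, hg.ne hk]

variable {R : Type*} [CommRing R]

theorem det_updateCol_single_one {m : ℕ} (A : Matrix (Fin (m + 1)) (Fin (m + 1)) R)
    (r c : Fin (m + 1)) :
    (A.updateCol c (Pi.single r 1)).det =
      (-1) ^ (r + c : ℕ) * (A.submatrix r.succAbove c.succAbove).det := by
  rw [det_succ_column _ c, Fintype.sum_eq_single r fun i hi => by simp [Pi.single_eq_of_ne hi]]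
  simp

theorem det_one_updateCol_updateCol {m : ℕ} (x y : Fin (m + 2) → R) :
    (((1 : Matrix (Fin (m + 2)) (Fin (m + 2)) R).updateCol (Fin.last m).castSucc x).updateCol
      (Fin.last (m + 1)) y).det =
      x (Fin.last m).castSucc * y (Fin.last (m + 1)) -
        x (Fin.last (m + 1)) * y (Fin.last m).castSucc := by
  set C := ((1 : Matrix (Fin (m + 2)) (Fin (m + 2)) R).updateCol (Fin.last m).castSucc x).updateCol
      (Fin.last (m + 1)) y with hC_def
  have hblocks : C.submatrix finSumFinEquiv finSumFinEquiv = fromBlocks 1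
      (of fun i t => C (Fin.castAdd 2 i) (Fin.natAdd m t)) 0
      (of fun s t => C (Fin.natAdd m s) (Fin.natAdd m t)) := by
    ext (i | i) (k | k) <;>
      simp only [hC_def, submatrix_apply, updateCol_apply, finSumFinEquiv_apply_left,
        finSumFinEquiv_apply_right, fromBlocks_apply₁₁, fromBlocks_apply₁₂, fromBlocks_apply₂₁,
        fromBlocks_apply₂₂, one_apply, of_apply, zero_apply, Fin.ext_iff, Fin.val_castAdd,
        Fin.val_natAdd, Fin.val_last, Fin.val_castSucc] <;>
      split_ifs <;> first | rfl | omega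
  rw [← det_submatrix_equiv_self finSumFinEquiv, hblocks, det_fromBlocks_zero₂₁, det_one, one_mul,
    det_fin_two]
  have h0 : Fin.natAdd m (0 : Fin 2) = (Fin.last m).castSucc := rfl
  have h1 : Fin.natAdd m (1 : Fin 2) = Fin.last (m + 1) := rfl
  have hne : (Fin.last m).castSucc ≠ Fin.last (m + 1) := (Fin.castSucc_lt_last _).ne
  simp only [of_apply, h0, h1, hC_def, updateCol_self, updateCol_ne hne]
  ring

theorem desnanot_jacobi_of_isRegular {m : ℕ} (A : Matrix (Fin (m + 2)) (Fin (m + 2)) R)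
    (hA : IsRegular A.det) :
    A.det * (A.submatrix (Fin.castSucc ∘ Fin.succ) (Fin.castSucc ∘ Fin.castSucc)).det =
      (A.submatrix Fin.succ (Fin.last m).castSucc.succAbove).det *
          (A.submatrix Fin.castSucc Fin.castSucc).det -
        (A.submatrix Fin.castSucc (Fin.last m).castSucc.succAbove).det *
          (A.submatrix Fin.succ Fin.castSucc).det := by
  set c₀ : Fin (m + 2) := (Fin.last m).castSucc
  set c₁ : Fin (m + 2) := Fin.last (m + 1)
  set C := ((1 : Matrix (Fin (m + 2)) (Fin (m + 2)) R).updateCol c₀ (A.adjugate.col 0)).updateCol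
    c₁ (A.adjugate.col c₁)
  have hAC : A * C = (A.updateCol c₀ (A.det • Pi.single 0 1)).updateCol c₁
      (A.det • Pi.single c₁ 1) := by
    simp only [C, mul_updateCol, mul_one, ← mulVec_single_one, mulVec_mulVec, mul_adjugate,
      smul_mulVec, one_mulVec]
  have hdetAC : (A * C).det = A.det * (A.det * ((-1) ^ m *
      (A.submatrix (Fin.castSucc ∘ Fin.succ) (Fin.castSucc ∘ Fin.castSucc)).det)) := by
    have hsingle : (Pi.single 0 1 : Fin (m + 2) → R) ∘ Fin.castSucc = Pi.single 0 1 := by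
      funext i
      simp [Pi.single_apply]
    rw [hAC, det_updateCol_smul, det_updateCol_single_one, Fin.succAbove_last,
      submatrix_updateCol_of_injective _ (Fin.castSucc_injective _), Pi.smul_comp, hsingle,
      det_updateCol_smul, det_updateCol_single_one, Fin.succAbove_last, Fin.succAbove_zero,
      submatrix_submatrix]
    simp [c₁, ← two_mul, pow_mul]
  have hdetC : C.det = (-1) ^ m *
      ((A.submatrix Fin.succ c₀.succAbove).det * (A.submatrix Fin.castSucc Fin.castSucc).det -
        (A.submatrix Fin.castSucc c₀.succAbove).det * (A.submatrix Fin.succ Fin.castSucc).det) := by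
    rw [det_one_updateCol_updateCol]
    simp only [col_apply, adjugate_fin_succ_eq_det_submatrix, c₁, Fin.succAbove_last]
    simp only [c₀, Fin.val_castSucc, Fin.val_last, Fin.coe_ofNat_eq_mod, Nat.zero_mod, zero_add,
      Fin.succAbove_zero, ← two_mul, pow_mul, even_two, Even.neg_pow, one_pow, one_mul, pow_succ,
      mul_neg, mul_one, neg_mul, odd_add_one_self, Odd.neg_one_pow, neg_neg]
    ring
  have hcancel : C.det = A.det * ((-1) ^ m *
      (A.submatrix (Fin.castSucc ∘ Fin.succ) (Fin.castSucc ∘ Fin.castSucc)).det) :=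
    hA.left (show A.det * C.det = _ by rw [← det_mul, hdetAC])
  rw [hdetC] at hcancel
  exact (isUnit_neg_one.pow m).mul_left_cancel (by linear_combination hcancel.symm)

theorem map_charmatrix_neg_evalRingHom_zero {n : Type*} [Fintype n] [DecidableEq n]
    (A : Matrix n n R) : (charmatrix (-A)).map (Polynomial.evalRingHom 0) = A := by
  ext i j
  obtain rfl | hij := eq_or_ne i j
  · simp [charmatrix_apply_eq]
  · simp [charmatrix_apply_ne _ _ _ hij]

theorem desnanot_jacobi {m : ℕ} (A : Matrix (Fin (m + 2)) (Fin (m + 2)) R) :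
    A.det * (A.submatrix (Fin.castSucc ∘ Fin.succ) (Fin.castSucc ∘ Fin.castSucc)).det =
      (A.submatrix Fin.succ (Fin.last m).castSucc.succAbove).det *
          (A.submatrix Fin.castSucc Fin.castSucc).det -
        (A.submatrix Fin.castSucc (Fin.last m).castSucc.succAbove).det *
          (A.submatrix Fin.succ Fin.castSucc).det := by
  have h := congrArg (Polynomial.evalRingHom 0)
    (desnanot_jacobi_of_isRegular (charmatrix (-A)) (charpoly_monic (-A)).isRegular)
  simpa only [map_sub, map_mul, RingHom.map_det, RingHom.mapMatrix_apply, ← submatrix_map,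
    map_charmatrix_neg_evalRingHom_zero] using h

end Matrix

open Matrix

theorem stmt_1 (u b : ℕ → ℝ) (j n : ℕ) (hn : 1 ≤ n) :
    fdet u b j n * hankel u (j + 1) (n - 1) =
      fdet u b (j + 1) (n - 1) * hankel u j n
        - fdet u b j (n - 1) * hankel u (j + 1) n := by
  obtain ⟨m, rfl⟩ : ∃ m, n = m + 1 := ⟨n - 1, by omega⟩
  set M : Matrix (Fin (m + 2)) (Fin (m + 2)) ℝ :=
    of fun i k => if (k : ℕ) < m + 1 then u (j + i + k) else b (j + i)
  rw [Nat.add_sub_cancel]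
  convert desnanot_jacobi M using 3 <;> simp only [hankel, fdet] <;> congr 1 <;> ext i k <;>
    simp only [M, of_apply, submatrix_apply, Function.comp_apply, Fin.succAbove, Fin.lt_def,
      Fin.val_succ, Fin.val_castSucc, Fin.val_last] <;>
    split_ifs <;> (try simp only [Fin.val_succ, Fin.val_castSucc] at *) <;>
    first | omega | rfl | (congr 1; omega)
end

section
/- Let (u_l)_{l≥0} be a real sequence. For all integers j ≥ 0 and n ≥ 1, the following determinant identity holds: H^{(j)}_{n+1} · K^{(j+1)}_n = H^{(j)}_n · K^{(j+1)}_{n+1} − H^{(j+1)}_n · K^{(j)}_{n+1}. -/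
/-- `Kdet u j n` = the determinant `K^{(j)}_n` of the `n×n` matrix whose first row
is `(1,…,1)` and whose `(i+1)`-th row, for `1 ≤ i ≤ n-1`, is
`(u_{j+i-1}, u_{j+i}, …, u_{j+i+n-2})` (with `K^{(j)}_0 = 1`). -/
noncomputable def Kdet (u : ℕ → ℝ) (j n : ℕ) : ℝ :=
  Matrix.det (Matrix.of fun i k : Fin n =>
    if (i : ℕ) = 0 then 1 else u (j + ((i : ℕ) - 1) + k))

/-!
Let `A` be the `(n + 2) × (n + 1)` matrix whose row `0` is `(1, …, 1)` and whose row `x ≥ 1` is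
`(u_{j+x-1+k})_k`, and let `φ` be the linear form sending `w` to the determinant with first row
`(w_0, …, w_{n-1})` and further rows `(u_{j+1+i+k})_k`, `i < n - 1`. Since `φ` is linear,
`∑ x, (-1)^x φ (A x) det (A without row x)` is a combination of the column expansions of `A`
bordered by one of its own columns, so it vanishes. For `2 ≤ x ≤ n` the row `A x`
repeats a row of `φ`, and the three remaining terms are the three products of the identity
(a cyclic row shift accounts for the sign of the last one).
-/

open Matrix

section AlienCofactors

variable {R : Type*} [CommRing R] {N : ℕ}

theorem Matrix.sum_neg_one_pow_mul_apply_mul_det_submatrix_succAbove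
    (A : Matrix (Fin (N + 1)) (Fin N) R) (k : Fin N) :
    ∑ x : Fin (N + 1), (-1) ^ (x : ℕ) * A x k * det (A.submatrix x.succAbove id) = 0 := by
  -- expansion along column `0` of `A` bordered on the left by its own `k`-th column
  have h := det_succ_column_zero (of fun x => Fin.cons (A x k) (A x) : Matrix _ (Fin (N + 1)) R)
  rw [det_zero_of_column_eq (Fin.succ_ne_zero k).symm (fun _ => by simp)] at h
  exact h.symm

theorem Matrix.sum_neg_one_pow_mul_map_row_mul_det_submatrix_succAbove
    (A : Matrix (Fin (N + 1)) (Fin N) R) (f : (Fin N → R) →ₗ[R] R) :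
    ∑ x : Fin (N + 1), (-1) ^ (x : ℕ) * f (A x) * det (A.submatrix x.succAbove id) = 0 := by
  have hf (x) : f (A x) = ∑ k, A x k * f (fun i => if k = i then 1 else 0) :=
    f.pi_apply_eq_sum_univ (A x)
  simp only [hf, Finset.mul_sum, Finset.sum_mul]
  rw [Finset.sum_comm]
  refine Finset.sum_eq_zero fun k _ => ?_
  have h := congrArg (· * f fun i => if k = i then 1 else 0)
    (sum_neg_one_pow_mul_apply_mul_det_submatrix_succAbove A k)
  simp only [Finset.sum_mul, zero_mul] at h
  exact (Finset.sum_congr rfl fun x _ => by ring).trans h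

end AlienCofactors

section ConsRow

variable {R : Type*} [CommRing R] {m : ℕ}

theorem Matrix.det_of_cons_eq_neg_one_pow_mul_det_of_snoc (M : Fin m → Fin (m + 1) → R)
    (v : Fin (m + 1) → R) :
    det (of (Fin.cons v M)) = (-1) ^ m * det (of (Fin.snoc M v)) := by
  rw [Fin.snoc_eq_cons_rotate]
  change _ = _ * det ((of (Fin.cons v M)).submatrix (finRotate (m + 1)) id)
  rw [det_permute, sign_finRotate, add_tsub_cancel_right]
  push_cast
  rw [← mul_assoc, ← pow_add, ← two_mul, pow_mul, neg_one_sq, one_pow, one_mul]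

def Matrix.detConsRow (B : Fin m → Fin (m + 1) → R) : (Fin (m + 1) → R) →ₗ[R] R :=
  detRowAlternating.toMultilinearMap.toLinearMap (Fin.cons 0 B) 0

theorem Matrix.detConsRow_apply (B : Fin m → Fin (m + 1) → R) (v : Fin (m + 1) → R) :
    detConsRow B v = det (of (Fin.cons v B)) := by
  rw [detConsRow, MultilinearMap.toLinearMap_apply]
  exact congrArg det (Fin.update_cons_zero ..)

end ConsRow

section HankelBorder

variable (u : ℕ → ℝ) (j : ℕ) {m : ℕ}

def hankelRows {a b : ℕ} : Fin a → Fin b → ℝ := fun i k => u (j + i + k)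

theorem hankel_eq_det_hankelRows (n : ℕ) :
    hankel u j n = det (of (hankelRows u j : Fin n → Fin n → ℝ)) := rfl

theorem Kdet_succ_eq_det_cons (n : ℕ) :
    Kdet u j (n + 1) = det (of (Fin.cons 1 (hankelRows u j : Fin n → Fin (n + 1) → ℝ))) := by
  rw [Kdet]
  congr 1
  ext i k
  cases i using Fin.cases <;> simp [hankelRows, add_assoc]

def hankelBorder (N : ℕ) : Matrix (Fin (N + 1)) (Fin N) ℝ := of (Fin.cons 1 (hankelRows u j))

theorem det_hankelBorder_submatrix_succAbove_zero (N : ℕ) :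
    det ((hankelBorder u j N).submatrix (Fin.succAbove 0) id) = hankel u j N := by
  rw [Fin.succAbove_zero]
  rfl

theorem det_hankelBorder_submatrix_succAbove_one (n : ℕ) :
    det ((hankelBorder u j (n + 1)).submatrix (Fin.succAbove 1) id) = Kdet u (j + 1) (n + 1) := by
  rw [Kdet_succ_eq_det_cons]
  congr 1
  ext i k
  cases i using Fin.cases <;> simp [hankelBorder, hankelRows, add_assoc, add_comm 1]

theorem det_hankelBorder_submatrix_succAbove_last (n : ℕ) :
    det ((hankelBorder u j (n + 1)).submatrix (Fin.last _).succAbove id) = Kdet u j (n + 1) := by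
  rw [Kdet_succ_eq_det_cons, Fin.succAbove_last]
  congr 1
  ext i k
  cases i using Fin.cases <;> simp [hankelBorder, hankelRows]

def hankelRowForm (m : ℕ) : (Fin (m + 2) → ℝ) →ₗ[ℝ] ℝ :=
  (detConsRow (hankelRows u (j + 1))).comp (LinearMap.funLeft ℝ ℝ Fin.castSucc)

theorem hankelRowForm_apply (w : Fin (m + 2) → ℝ) :
    hankelRowForm u j m w = det (of (Fin.cons (w ∘ Fin.castSucc) (hankelRows u (j + 1)))) :=
  detConsRow_apply _ _

theorem hankelRowForm_hankelBorder_zero :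
    hankelRowForm u j m (hankelBorder u j (m + 2) 0) = Kdet u (j + 1) (m + 1) := by
  rw [hankelRowForm_apply, Kdet_succ_eq_det_cons]
  rfl

theorem hankelRowForm_hankelBorder_one :
    hankelRowForm u j m (hankelBorder u j (m + 2) 1) = hankel u j (m + 1) := by
  rw [hankelRowForm_apply, hankel_eq_det_hankelRows]
  congr 1
  ext i k
  cases i using Fin.cases <;> simp [hankelBorder, hankelRows]
  ring_nf

theorem hankelRowForm_hankelBorder_castSucc_succ_succ (y : Fin m) :
    hankelRowForm u j m (hankelBorder u j (m + 2) y.castSucc.succ.succ) = 0 := by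
  rw [hankelRowForm_apply]
  refine det_zero_of_row_eq (Fin.succ_ne_zero y).symm ?_
  ext k
  simp [hankelBorder, hankelRows]
  ring_nf

theorem hankelRowForm_hankelBorder_last :
    hankelRowForm u j m (hankelBorder u j (m + 2) (Fin.last _)) =
      (-1) ^ m * hankel u (j + 1) (m + 1) := by
  rw [hankelRowForm_apply, det_of_cons_eq_neg_one_pow_mul_det_of_snoc, hankel_eq_det_hankelRows]
  congr 2
  ext i k
  cases i using Fin.lastCases <;> simp [hankelBorder, hankelRows]
  ring_nf

end HankelBorder

theorem stmt_7 (u : ℕ → ℝ) (j n : ℕ) (hn : 1 ≤ n) :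
    hankel u j (n + 1) * Kdet u (j + 1) n =
      hankel u j n * Kdet u (j + 1) (n + 1) - hankel u (j + 1) n * Kdet u j (n + 1) := by
  obtain ⟨m, rfl⟩ : ∃ m, n = m + 1 := ⟨n - 1, by omega⟩
  have h := sum_neg_one_pow_mul_map_row_mul_det_submatrix_succAbove
    (hankelBorder u j (m + 2)) (hankelRowForm u j m)
  rw [Fin.sum_univ_succ, Fin.sum_univ_succ, Fin.sum_univ_castSucc] at h
  simp only [hankelRowForm_hankelBorder_zero, hankelRowForm_hankelBorder_one,
    hankelRowForm_hankelBorder_castSucc_succ_succ, hankelRowForm_hankelBorder_last,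
    Fin.succ_zero_eq_one, Fin.succ_last, det_hankelBorder_submatrix_succAbove_zero,
    det_hankelBorder_submatrix_succAbove_one, det_hankelBorder_submatrix_succAbove_last,
    mul_zero, zero_mul, Finset.sum_const_zero, zero_add, Fin.val_zero, Fin.val_one, Fin.val_last,
    Nat.succ_eq_add_one, pow_zero, pow_one, one_mul] at h
  have hsign : (-1 : ℝ) ^ (m + 2) * (-1) ^ m = 1 := by
    rw [← pow_add]
    exact Even.neg_one_pow ⟨m + 1, by ring⟩
  linear_combination h - hankel u (j + 1) (m + 1) * Kdet u j (m + 2) * hsign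
end

section
/- Let (u_l)_{l≥0} be a real sequence, and fix j ≥ 0 and n ≥ 1. If H^{(j)}_n, H^{(j+1)}_{n−1}, K^{(j)}_n, and K^{(j+1)}_n are all nonzero (so that r^{(j)}_n, r^{(j+1)}_n, and s^{(j+1)}_{n−1} are defined and r^{(j)}_n ≠ 0), then the rs-algorithm recursion holds: s^{(j)}_n = s^{(j+1)}_{n−1} · (r^{(j+1)}_n / r^{(j)}_n − 1). -/
/-- `rrs u j n = r^{(j)}_n = H^{(j)}_n / K^{(j)}_n`. -/
noncomputable def rrs (u : ℕ → ℝ) (j n : ℕ) : ℝ := hankel u j n / Kdet u j n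

/-- `srs u j n = s^{(j)}_n = K^{(j)}_{n+1} / H^{(j)}_n`. -/
noncomputable def srs (u : ℕ → ℝ) (j n : ℕ) : ℝ := Kdet u j (n + 1) / hankel u j n

/-!
Clearing denominators, the recursion becomes
`K^{(j)}_{n+1} H^{(j+1)}_{n-1} = H^{(j+1)}_n K^{(j)}_n - K^{(j+1)}_n H^{(j)}_n`,
which is the Desnanot–Jacobi identity for the matrix of `K^{(j)}_{n+1}`: deleting its first or
last row and first or last column leaves the matrices of `H^{(j+1)}_n`, `K^{(j)}_n`, `K^{(j+1)}_n`
and `H^{(j)}_n`, and deleting both leaves that of `H^{(j+1)}_{n-1}`.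

Desnanot–Jacobi is the `2 × 2` case of Jacobi's complementary minor theorem. Multiplying `A` by
the matrix that agrees with `adj A` on the first block of columns and with the identity elsewhere
gives a block triangular matrix, whence `det A * det (adj A)₁₁ = (det A) ^ k * det A₂₂`. To divide
by `det A`, apply this to the generic matrix `charmatrix (-A)`, whose determinant is monic, and
specialise `X = 0`.
-/

namespace Matrix

variable {R : Type*} [CommRing R] {ι κ : Type*} [Fintype ι] [Fintype κ] [DecidableEq ι]
  [DecidableEq κ]

theorem det_mul_det_toBlocks₁₁_adjugate (A : Matrix (ι ⊕ κ) (ι ⊕ κ) R) :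
    A.det * A.adjugate.toBlocks₁₁.det = A.det ^ Fintype.card ι * A.toBlocks₂₂.det := by
  have hblocks : fromBlocks A.toBlocks₁₁ A.toBlocks₁₂ A.toBlocks₂₁ A.toBlocks₂₂ *
      fromBlocks A.adjugate.toBlocks₁₁ A.adjugate.toBlocks₁₂ A.adjugate.toBlocks₂₁
        A.adjugate.toBlocks₂₂ = fromBlocks (A.det • 1) 0 0 (A.det • 1) := by
    simp only [fromBlocks_toBlocks, mul_adjugate, ← fromBlocks_one, fromBlocks_smul, smul_zero]
  rw [fromBlocks_multiply, fromBlocks_inj] at hblocks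
  obtain ⟨h₁₁, -, h₂₁, -⟩ := hblocks
  have hmul : A * fromBlocks A.adjugate.toBlocks₁₁ 0 A.adjugate.toBlocks₂₁ 1 =
      fromBlocks (A.det • 1) A.toBlocks₁₂ 0 A.toBlocks₂₂ := by
    nth_rw 1 [← fromBlocks_toBlocks A]
    rw [fromBlocks_multiply, h₁₁, h₂₁]
    simp
  have := congrArg det hmul
  rwa [det_mul, det_fromBlocks_zero₁₂, det_fromBlocks_zero₂₁, det_one, mul_one, det_smul,
    det_one, mul_one] at this

theorem det_toBlocks₁₁_adjugate [Nonempty ι] (A : Matrix (ι ⊕ κ) (ι ⊕ κ) R) :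
    A.adjugate.toBlocks₁₁.det = A.det ^ (Fintype.card ι - 1) * A.toBlocks₂₂.det := by
  set Ã := charmatrix (-A)
  have hreg : IsLeftRegular Ã.det := (charpoly_monic (-A)).isRegular.left
  have hÃ : Ã.adjugate.toBlocks₁₁.det = Ã.det ^ (Fintype.card ι - 1) * Ã.toBlocks₂₂.det := by
    refine hreg ?_
    dsimp only
    rw [det_mul_det_toBlocks₁₁_adjugate, ← mul_assoc, ← pow_succ',
      Nat.sub_add_cancel Fintype.card_pos]
  have hmap : (Polynomial.evalRingHom 0).mapMatrix Ã = A := by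
    ext i k
    by_cases h : i = k <;> simp [Ã, h]
  have := congrArg (Polynomial.evalRingHom 0) hÃ
  rw [map_mul, map_pow, RingHom.map_det, RingHom.map_det, RingHom.map_det] at this
  rw [← hmap, ← RingHom.map_adjugate]
  exact this

end Matrix

noncomputable def finExtremesEquiv (m : ℕ) : Fin 2 ⊕ Fin m ≃ Fin (m + 2) :=
  Equiv.ofBijective (Sum.elim ![0, Fin.last (m + 1)] fun i => i.succ.castSucc) <| by
    rw [Fintype.bijective_iff_injective_and_card]
    refine ⟨?_, by simp [add_comm]⟩
    rintro (a | a) (b | b) h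
    · fin_cases a <;> fin_cases b <;> simp_all [Fin.ext_iff]
    · fin_cases a <;> simp [Fin.ext_iff, b.isLt.ne'] at h
    · fin_cases b <;> simp [Fin.ext_iff, a.isLt.ne] at h
    · simpa [Fin.ext_iff] using h

theorem Matrix.desnanot_jacobi_s8 {R : Type*} [CommRing R] {m : ℕ}
    (A : Matrix (Fin (m + 2)) (Fin (m + 2)) R) :
    A.det * (A.submatrix (fun i : Fin m => i.castSucc.succ) fun i => i.castSucc.succ).det =
      (A.submatrix Fin.succ Fin.succ).det * (A.submatrix Fin.castSucc Fin.castSucc).det -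
        (A.submatrix Fin.castSucc Fin.succ).det * (A.submatrix Fin.succ Fin.castSucc).det := by
  set e := finExtremesEquiv m
  have hcore : (A.submatrix e e).toBlocks₂₂ =
      A.submatrix (fun i : Fin m => i.castSucc.succ) (fun i => i.castSucc.succ) := rfl
  have h := det_toBlocks₁₁_adjugate (A.submatrix e e)
  rw [hcore, adjugate_submatrix_equiv_self, det_submatrix_equiv_self, det_fin_two] at h
  simp only [e, finExtremesEquiv, toBlocks₁₁, Equiv.coe_ofBijective, submatrix_apply,
    Sum.elim_inl, of_apply, cons_val_zero, cons_val_one, cons_val_fin_one,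
    adjugate_fin_succ_eq_det_submatrix, Fin.succAbove_zero, Fin.succAbove_last, Fin.val_last,
    Fin.coe_ofNat_eq_mod, Nat.zero_mod, add_zero, zero_add, Even.add_self, Even.neg_pow,
    one_pow, pow_zero, one_mul, Fintype.card_fin, Nat.add_one_sub_one, pow_one] at h
  have hsign : (-1 : R) ^ (m + 1) * (-1) ^ (m + 1) = 1 := by
    rw [← mul_pow, neg_one_mul, neg_neg, one_pow]
  linear_combination -h -
    (A.submatrix Fin.castSucc Fin.succ).det * (A.submatrix Fin.succ Fin.castSucc).det * hsign

theorem kdet_mul_hankel (u : ℕ → ℝ) (j m : ℕ) :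
    Kdet u j (m + 2) * hankel u (j + 1) m =
      hankel u (j + 1) (m + 1) * Kdet u j (m + 1) -
        Kdet u (j + 1) (m + 1) * hankel u j (m + 1) := by
  convert Matrix.desnanot_jacobi_s8
    (Matrix.of fun i k : Fin (m + 2) => if (i : ℕ) = 0 then (1 : ℝ) else u (j + (i - 1) + k))
    using 3 <;> simp only [hankel, Kdet] <;> congr 1 <;> ext i k <;>
    simp only [Matrix.of_apply, Matrix.submatrix_apply, Fin.val_eq_zero_iff, Fin.succ_ne_zero,
      Fin.castSucc_eq_zero_iff, ↓reduceIte, Fin.val_succ, Fin.val_castSucc,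
      add_tsub_cancel_right] <;> ring_nf

theorem stmt_8_general (u : ℕ → ℝ) (j n : ℕ) (hn : 1 ≤ n)
    (h1 : hankel u j n ≠ 0) (h2 : hankel u (j + 1) (n - 1) ≠ 0)
    (h4 : Kdet u (j + 1) n ≠ 0) :
    srs u j n = srs u (j + 1) (n - 1) * (rrs u (j + 1) n / rrs u j n - 1) := by
  obtain ⟨m, rfl⟩ : ∃ m, n = m + 1 := ⟨n - 1, by omega⟩
  rw [Nat.add_sub_cancel] at h2 ⊢
  unfold srs rrs
  field_simp
  linear_combination kdet_mul_hankel u j m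

theorem stmt_8 (u : ℕ → ℝ) (j n : ℕ) (hn : 1 ≤ n)
    (h1 : hankel u j n ≠ 0) (h2 : hankel u (j + 1) (n - 1) ≠ 0)
    (h3 : Kdet u j n ≠ 0) (h4 : Kdet u (j + 1) n ≠ 0) :
    srs u j n = srs u (j + 1) (n - 1) * (rrs u (j + 1) n / rrs u j n - 1) :=
  stmt_8_general u j n hn h1 h2 h4
end

section
/- Let (u_l)_{l≥0} be a real sequence, and fix j ≥ 0 and n ≥ 1. If H^{(j)}_n, H^{(j+1)}_n, K^{(j)}_{n+1}, and K^{(j+1)}_n are all nonzero (so that r^{(j+1)}_n, s^{(j)}_n, and s^{(j+1)}_n are defined and s^{(j)}_n ≠ 0), then the rs-algorithm recursion holds: r^{(j)}_{n+1} = r^{(j+1)}_n · (s^{(j+1)}_n / s^{(j)}_n − 1). -/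
open Matrix

section Determinant
variable {R : Type*} [CommRing R] {N : ℕ}

theorem sum_neg_one_pow_mul_det_succAbove_smul (x : Fin (N + 1) → Fin N → R) :
    ∑ i : Fin (N + 1), ((-1) ^ (i : ℕ) * det (of fun r ↦ x (i.succAbove r))) • x i = 0 := by
  funext l
  have hcol : det (of fun i ↦ Fin.cons (x i l) (x i) : Matrix (Fin (N + 1)) (Fin (N + 1)) R) = 0 :=
    det_zero_of_column_eq (Fin.succ_ne_zero l).symm fun _ ↦ rfl
  rw [det_succ_column_zero] at hcol
  rw [Pi.zero_apply, ← hcol, Finset.sum_apply]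
  refine Finset.sum_congr rfl fun i _ ↦ ?_
  simp only [Pi.smul_apply, smul_eq_mul, submatrix, of_apply, Fin.cons_zero, Fin.cons_succ]
  ring

/-- If all but three of the `x i` are rows of `C` other than `r`, only three terms survive:
a three-term Plücker relation. -/
theorem sum_neg_one_pow_mul_det_succAbove_mul_det_updateRow (x : Fin (N + 1) → Fin N → R)
    (C : Matrix (Fin N) (Fin N) R) (r : Fin N) :
    ∑ i : Fin (N + 1), (-1) ^ (i : ℕ) * det (of fun s ↦ x (i.succAbove s)) *
      det (C.updateRow r (x i)) = 0 := by
  let φ := (detRowAlternating : (Fin N → R) [⋀^Fin N]→ₗ[R] R).toMultilinearMap.toLinearMap C r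
  have h := congrArg φ (sum_neg_one_pow_mul_det_succAbove_smul x)
  simp only [map_sum, map_smul, smul_eq_mul, map_zero] at h
  exact h

theorem det_eq_det_submatrix_castSucc_of_row_last (M : Matrix (Fin (N + 1)) (Fin (N + 1)) R)
    (h : M (Fin.last N) = Pi.single (Fin.last N) 1) :
    M.det = (M.submatrix Fin.castSucc Fin.castSucc).det := by
  rw [det_succ_row M (Fin.last N), Fintype.sum_eq_single (Fin.last N)]
  · simp [h, ← two_mul, pow_mul]
  · intro k hk
    simp [h, hk]

end Determinant

noncomputable def borderedHankel (u : ℕ → ℝ) (j m : ℕ) : Matrix (Fin (m + 1)) (Fin (m + 1)) ℝ :=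
  of (Fin.lastCases (Pi.single (Fin.last m) 1) fun i k ↦ u (j + i + k))

section BorderedHankel
variable (u : ℕ → ℝ) (j m : ℕ)

theorem borderedHankel_last : borderedHankel u j m (Fin.last m) = Pi.single (Fin.last m) 1 := by
  funext k
  simp [borderedHankel]

theorem borderedHankel_castSucc (i : Fin m) (k : Fin (m + 1)) :
    borderedHankel u j m i.castSucc k = u (j + i + k) := by
  simp [borderedHankel]

theorem det_borderedHankel : (borderedHankel u j m).det = hankel u j m := by
  rw [det_eq_det_submatrix_castSucc_of_row_last _ (borderedHankel_last u j m)]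
  simp [hankel, submatrix, borderedHankel_castSucc]

theorem borderedHankel_updateRow_zero_last (y : Fin (m + 2) → ℝ) :
    (borderedHankel u j (m + 1)).updateRow 0 y (Fin.last (m + 1)) =
      Pi.single (Fin.last (m + 1)) 1 := by
  rw [updateRow_ne Fin.last_pos.ne', borderedHankel_last]

theorem det_borderedHankel_updateRow_zero_one :
    ((borderedHankel u j (m + 1)).updateRow 0 1).det = Kdet u (j + 1) (m + 1) := by
  rw [det_eq_det_submatrix_castSucc_of_row_last _ (borderedHankel_updateRow_zero_last ..)]
  unfold Kdet
  congr 1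
  ext i k
  rcases Fin.eq_zero_or_eq_succ i with rfl | ⟨i, rfl⟩
  · simp
  · rw [of_apply, submatrix_apply, updateRow_ne (by simp), borderedHankel_castSucc]
    simp [add_comm, add_left_comm]

theorem det_borderedHankel_updateRow_zero_shift :
    ((borderedHankel u j (m + 1)).updateRow 0 fun k ↦ u (j + (m + 1) + k)).det =
      (-1) ^ m * hankel u (j + 1) (m + 1) := by
  have hsign : ((Equiv.Perm.sign (Fin.last m).cycleRange.symm : ℤ) : ℝ) = (-1) ^ m := by
    simp
  rw [det_eq_det_submatrix_castSucc_of_row_last _ (borderedHankel_updateRow_zero_last ..),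
    hankel, ← hsign, ← det_permute]
  congr 1
  ext i k
  rcases Fin.eq_zero_or_eq_succ i with rfl | ⟨i, rfl⟩
  · simp [add_comm, add_left_comm]
  · rw [submatrix_apply, updateRow_ne (by simp), borderedHankel_castSucc]
    simp only [submatrix_apply, of_apply, id, Fin.cycleRange_symm_succ, Fin.succAbove_last_apply,
      Fin.val_castSucc, Fin.val_succ]
    ring_nf

noncomputable def kRows (u : ℕ → ℝ) (j m : ℕ) : Fin (m + 3) → Fin (m + 2) → ℝ :=
  fun i k ↦ if (i : ℕ) = 0 then 1 else u (j + (i - 1) + k)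

theorem det_kRows_succAbove_zero :
    det (of fun s ↦ kRows u j m (Fin.succAbove 0 s)) = hankel u j (m + 2) :=
  rfl

theorem det_kRows_succAbove_one :
    det (of fun s ↦ kRows u j m (Fin.succAbove 1 s)) = Kdet u (j + 1) (m + 2) := by
  unfold Kdet
  congr 1
  ext s k
  rcases Fin.eq_zero_or_eq_succ s with rfl | ⟨s, rfl⟩
  · simp [kRows]
  · simp [kRows, Fin.succAbove, add_comm, add_left_comm]

theorem det_kRows_succAbove_last :
    det (of fun s ↦ kRows u j m ((Fin.last _).succAbove s)) = Kdet u j (m + 2) := by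
  unfold Kdet
  congr 1
  ext s k
  simp [kRows]

theorem hankel_mul_Kdet_eq_sub :
    hankel u j (m + 2) * Kdet u (j + 1) (m + 1) =
      Kdet u (j + 1) (m + 2) * hankel u j (m + 1) - hankel u (j + 1) (m + 1) * Kdet u j (m + 2) := by
  have hx_zero : kRows u j m 0 = 1 := by
    funext k
    simp [kRows]
  have hx_one : kRows u j m 1 = borderedHankel u j (m + 1) 0 := by
    funext k
    rw [← Fin.castSucc_zero, borderedHankel_castSucc]
    simp [kRows]
  have hx_last : kRows u j m (Fin.last _) = fun k : Fin (m + 2) ↦ u (j + (m + 1) + k) := by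
    funext k
    simp [kRows]
  have hx_mid (i : Fin m) :
      det ((borderedHankel u j (m + 1)).updateRow 0 (kRows u j m i.castSucc.succ.succ)) = 0 := by
    refine det_zero_of_row_eq (i := 0) (j := i.succ.castSucc) (by simp [Fin.ext_iff]) ?_
    funext k
    rw [updateRow_self, updateRow_ne (by simp [Fin.ext_iff]), borderedHankel_castSucc]
    simp [kRows]
  have h := sum_neg_one_pow_mul_det_succAbove_mul_det_updateRow (kRows u j m)
    (borderedHankel u j (m + 1)) 0
  rw [Fin.sum_univ_succ, Fin.sum_univ_succ, Fin.sum_univ_castSucc,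
    Finset.sum_eq_zero fun i _ ↦ by rw [hx_mid, mul_zero]] at h
  simp only [Fin.succ_zero_eq_one, Fin.succ_last, det_kRows_succAbove_zero,
    det_kRows_succAbove_one, det_kRows_succAbove_last, hx_zero, hx_one, hx_last,
    updateRow_eq_self] at h
  rw [det_borderedHankel_updateRow_zero_one, det_borderedHankel,
    det_borderedHankel_updateRow_zero_shift] at h
  have hsq : ((-1 : ℝ) ^ m) ^ 2 = 1 := by rw [← pow_mul, pow_mul', neg_one_sq, one_pow]
  simp only [Fin.coe_ofNat_eq_mod, Nat.zero_mod, pow_zero, one_mul, Nat.one_mod, pow_one, neg_mul,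
    Fin.val_last, Nat.succ_eq_add_one, zero_add] at h
  linear_combination h - Kdet u j (m + 2) * hankel u (j + 1) (m + 1) * hsq

end BorderedHankel

theorem stmt_9_general (u : ℕ → ℝ) (j n : ℕ) (hn : 1 ≤ n)
    (h2 : hankel u (j + 1) n ≠ 0)
    (h3 : Kdet u j (n + 1) ≠ 0) (h4 : Kdet u (j + 1) n ≠ 0) :
    rrs u j (n + 1) = rrs u (j + 1) n * (srs u (j + 1) n / srs u j n - 1) := by
  obtain ⟨m, rfl⟩ := Nat.exists_eq_add_of_le' hn
  rw [rrs, rrs, srs, srs, div_div_div_eq]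
  field_simp
  linear_combination hankel_mul_Kdet_eq_sub u j m

theorem stmt_9 (u : ℕ → ℝ) (j n : ℕ) (hn : 1 ≤ n)
    (h1 : hankel u j n ≠ 0) (h2 : hankel u (j + 1) n ≠ 0)
    (h3 : Kdet u j (n + 1) ≠ 0) (h4 : Kdet u (j + 1) n ≠ 0) :
    rrs u j (n + 1) = rrs u (j + 1) n * (srs u (j + 1) n / srs u j n - 1) :=
  stmt_9_general u j n hn h2 h3 h4
end

section
/- Let r ≥ 1, let c_1, …, c_r be distinct complex numbers with Re c_k < 0 for all k, let p_1, …, p_r be complex polynomials with deg p_k = μ_k exactly (leading coefficient nonzero), and set n = Σ_{k=1}^r (μ_k + 1) and f(x) = Σ_{k=1}^r p_k(x) e^{c_k x}. Let h > 0 be such that the numbers e^{c_1 h}, …, e^{c_r h} are pairwise distinct. Then there exist complex constants α_1, …, α_n such that for every real x, ∫_x^∞ f(t) dt = Σ_{k=1}^n α_k f(x + (k−1)h). -/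
/-!
With `λ_k = e^{c_k h}` one has `f(x + jh) = Σ_k λ_k^j p_k(x + jh) e^{c_k x}`, while
`∫_x^∞ p_k(t) e^{c_k t} dt = -w_k(x) e^{c_k x}` for the polynomial `w_k` of degree `μ_k` solving
`w_k' + c_k w_k = p_k`. So it suffices to find a polynomial `ρ` of degree `< n` with
`ρ(T_k) p_k = -w_k` for every `k`, where `T_k q = λ_k q(X + h)`; then `α_j` is the `j`-th
coefficient of `ρ`. Since `T_k - λ_k` lowers degrees by exactly one, `ρ(T_k) p_k = 0` forces
`(X - λ_k)^{μ_k + 1} ∣ ρ`, and as the `λ_k` are distinct a nonzero such `ρ` has degree `≥ n`.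
Hence `ρ ↦ (ρ(T_k) p_k)_k` is an injective linear map between spaces of the same dimension `n`,
so it is onto.
-/

open Polynomial MeasureTheory Filter Topology Set

namespace Polynomial

variable {K : Type*} [Field K]

theorem aeval_eq_sum_fin_of_mem_degreeLT {R A : Type*} [CommSemiring R] [Semiring A]
    [Algebra R A] {n : ℕ} {ρ : R[X]} (hρ : ρ ∈ degreeLT R n) (x : A) :
    aeval x ρ = ∑ j : Fin n, ρ.coeff j • x ^ (j : ℕ) := by
  rw [aeval_def, eval₂_eq_sum,
    ← sum_fin (fun e a ↦ algebraMap R A a * x ^ e) (by simp) (mem_degreeLT.mp hρ)]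
  simp only [Algebra.smul_def]

theorem exists_degree_eq_and_apply_eq (L : Module.End K K[X])
    (hL : ∀ w, (L w).degree = w.degree) (q : K[X]) : ∃ w, w.degree = q.degree ∧ L w = q := by
  have hmaps : ∀ w ∈ degreeLT K (q.natDegree + 1), L w ∈ degreeLT K (q.natDegree + 1) :=
    fun w hw ↦ mem_degreeLT.mpr <| hL w ▸ mem_degreeLT.mp hw
  have hinj : Function.Injective (L.restrict hmaps) := by
    rw [← LinearMap.ker_eq_bot, LinearMap.ker_eq_bot']
    rintro ⟨w, _⟩ hw
    ext1
    change w = 0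
    rw [← degree_eq_bot, ← hL, show L w = 0 from congrArg Subtype.val hw, degree_zero]
  obtain ⟨⟨w, _⟩, hw⟩ := LinearMap.injective_iff_surjective.mp hinj
    ⟨q, mem_degreeLT.mpr <| degree_le_natDegree.trans_lt <| by exact_mod_cast Nat.lt_succ_self _⟩
  have hLw : L w = q := congrArg Subtype.val hw
  exact ⟨w, hLw ▸ (hL w).symm, hLw⟩

theorem degree_derivative_add_C_mul {c : K} (hc : c ≠ 0) (w : K[X]) :
    (derivative w + C c * w).degree = w.degree := by
  rcases eq_or_ne w 0 with rfl | hw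
  · simp
  rw [degree_add_eq_right_of_degree_lt] <;> rw [degree_C_mul hc]
  exact degree_derivative_lt hw

theorem exists_derivative_add_C_mul_eq {c : K} (hc : c ≠ 0) (q : K[X]) :
    ∃ w, w.degree = q.degree ∧ derivative w + C c * w = q := by
  obtain ⟨w, hw, hLw⟩ := exists_degree_eq_and_apply_eq (derivative + c • LinearMap.id)
    (fun w ↦ by simpa [smul_eq_C_mul] using degree_derivative_add_C_mul hc w) q
  exact ⟨w, hw, by simpa [smul_eq_C_mul] using hLw⟩

theorem degree_taylor_sub_self_lt (r : K) {p : K[X]} (hp : p ≠ 0) :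
    (taylor r p - p).degree < p.degree := by
  simpa only [degree_taylor] using
    degree_sub_lt_left (degree_taylor p r) ((taylor_eq_zero r p).not.2 hp) (leadingCoeff_taylor r p)

theorem coeff_taylor_sub_self_of_natDegree_eq_succ (r : K) {p : K[X]} {m : ℕ}
    (hp : p.natDegree = m + 1) :
    (taylor r p - p).coeff m = (m + 1) * r * p.coeff (m + 1) := by
  have hdeg : (hasseDeriv m p).natDegree < 2 :=
    (natDegree_hasseDeriv_le p m).trans_lt (by omega)
  rw [coeff_sub, taylor_coeff, eval_eq_sum_range' hdeg]
  simp only [hasseDeriv_coeff, Finset.sum_range_succ, Finset.range_one, Finset.sum_singleton,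
    zero_add, Nat.choose_self, Nat.cast_one, one_mul, pow_zero, mul_one, add_comm 1 m,
    Nat.choose_succ_self_right, Nat.cast_add, pow_one, add_sub_cancel_left]
  ring

theorem degree_taylor_sub_self [CharZero K] {r : K} (hr : r ≠ 0) {p : K[X]} {m : ℕ}
    (hp : p.degree = ↑(m + 1)) : (taylor r p - p).degree = m := by
  have hp0 : p ≠ 0 := by rintro rfl; exact WithBot.bot_ne_coe hp
  have hnat : p.natDegree = m + 1 := natDegree_eq_of_degree_eq_some hp
  refine le_antisymm ?_ (le_degree_of_ne_zero ?_)
  · have := degree_taylor_sub_self_lt r hp0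
    rw [hp] at this
    exact Order.le_of_lt_succ (by exact_mod_cast this)
  · rw [coeff_taylor_sub_self_of_natDegree_eq_succ r hnat, ← hnat]
    exact mul_ne_zero (mul_ne_zero (by exact_mod_cast m.succ_ne_zero) hr)
      (leadingCoeff_ne_zero.mpr hp0)

/-- On `q(x) e^{cx}` with `l = e^{ch}`, the shift `x ↦ x + h` acts on the polynomial factor as
`q ↦ l • q(X + h)`. -/
noncomputable def twistedShift (l h : K) : Module.End K K[X] := l • taylor h

theorem twistedShift_pow_apply (l h : K) (j : ℕ) (q : K[X]) :
    (twistedShift l h ^ j) q = l ^ j • taylor (j * h) q := by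
  induction j with
  | zero => simp
  | succ j ih =>
    rw [pow_succ', Module.End.mul_apply, ih, twistedShift, LinearMap.smul_apply, map_smul,
      taylor_taylor, smul_smul, ← pow_succ']
    push_cast
    ring_nf

theorem twistedShift_sub_algebraMap_apply (l h : K) (q : K[X]) :
    (twistedShift l h - algebraMap K _ l) q = l • (taylor h q - q) := by
  rw [LinearMap.sub_apply, twistedShift, LinearMap.smul_apply, Module.algebraMap_end_apply,
    smul_sub]

theorem degree_aeval_twistedShift_apply_le (l h : K) (ψ q : K[X]) :
    (aeval (twistedShift l h) ψ q).degree ≤ q.degree := by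
  induction ψ using Polynomial.induction_on' with
  | add ψ φ hψ hφ =>
    rw [map_add, LinearMap.add_apply]
    exact (degree_add_le _ _).trans (max_le hψ hφ)
  | monomial j a =>
    rw [aeval_monomial, Module.End.mul_apply, Module.algebraMap_end_apply, twistedShift_pow_apply]
    exact (degree_smul_le _ _).trans <| (degree_smul_le _ _).trans (degree_taylor q _).le

theorem degree_aeval_twistedShift_apply {l h : K} (hl : l ≠ 0) {σ : K[X]}
    (hσ : σ.eval l ≠ 0) (q : K[X]) : (aeval (twistedShift l h) σ q).degree = q.degree := by
  rcases eq_or_ne q 0 with rfl | hq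
  · simp
  obtain ⟨τ, hτ⟩ : X - C l ∣ σ - C (σ.eval l) := X_sub_C_dvd_sub_C_eval
  have hσ_eq : aeval (twistedShift l h) σ q = σ.eval l • q +
      (twistedShift l h - algebraMap K _ l) (aeval (twistedShift l h) τ q) := by
    conv_lhs => rw [eq_add_of_sub_eq' hτ]
    simp only [map_add, map_mul, map_sub, aeval_X, aeval_C, LinearMap.add_apply,
      Module.End.mul_apply, Module.algebraMap_end_apply]
  have hlt : ((twistedShift l h - algebraMap K _ l) (aeval (twistedShift l h) τ q)).degree <
      q.degree := by
    rw [twistedShift_sub_algebraMap_apply, smul_eq_C_mul, degree_C_mul hl]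
    set w := aeval (twistedShift l h) τ q
    rcases eq_or_ne w 0 with hw | hw
    · simpa [hw] using bot_lt_iff_ne_bot.mpr (degree_ne_bot.mpr hq)
    · exact (degree_taylor_sub_self_lt h hw).trans_le (degree_aeval_twistedShift_apply_le l h τ q)
  rw [hσ_eq, degree_add_eq_left_of_degree_lt] <;> rw [smul_eq_C_mul, degree_C_mul hσ]
  exact hlt

theorem degree_twistedShift_sub_pow_apply [CharZero K] {l h : K} (hl : l ≠ 0) (hh : h ≠ 0)
    (s : ℕ) {m : ℕ} {g : K[X]} (hg : g.degree = ↑(s + m)) :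
    (((twistedShift l h - algebraMap K _ l) ^ s) g).degree = m := by
  induction s generalizing g with
  | zero => simpa using hg
  | succ s ih =>
    rw [pow_succ, Module.End.mul_apply, twistedShift_sub_algebraMap_apply]
    apply ih
    rw [smul_eq_C_mul, degree_C_mul hl,
      degree_taylor_sub_self hh (m := s + m) (by rw [hg]; congr 1; omega)]

theorem pow_dvd_of_aeval_twistedShift_apply_eq_zero [CharZero K] {l h : K} (hl : l ≠ 0)
    (hh : h ≠ 0) {q : K[X]} {m : ℕ} (hq : q.degree = m) {ρ : K[X]} (hρ : ρ ≠ 0)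
    (h0 : aeval (twistedShift l h) ρ q = 0) : (X - C l) ^ (m + 1) ∣ ρ := by
  obtain ⟨σ, hρσ, hσ⟩ := ρ.exists_eq_pow_rootMultiplicity_mul_and_not_dvd hρ l
  set s := ρ.rootMultiplicity l
  by_contra hdvd
  have hsm : s ≤ m := by
    by_contra! hms
    exact hdvd ((pow_dvd_pow _ hms).trans (pow_rootMultiplicity_dvd ρ l))
  have hfac : aeval (twistedShift l h) ρ q =
      ((twistedShift l h - algebraMap K _ l) ^ s) (aeval (twistedShift l h) σ q) := by
    conv_lhs => rw [hρσ]
    simp only [map_mul, map_pow, map_sub, aeval_X, aeval_C, Module.End.mul_apply]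
  have hσq : (aeval (twistedShift l h) σ q).degree = ↑(s + (m - s)) := by
    rw [degree_aeval_twistedShift_apply hl (mt dvd_iff_isRoot.mpr hσ), hq,
      Nat.add_sub_cancel' hsm]
  have := degree_twistedShift_sub_pow_apply hl hh s hσq
  rw [← hfac, h0, degree_zero] at this
  exact WithBot.bot_ne_coe this

section Interpolation

variable [CharZero K] {ι : Type*} [Fintype ι] {l : ι → K} {h : K} {p : ι → K[X]} {μ : ι → ℕ}

theorem eq_zero_of_aeval_twistedShift_apply_eq_zero (hl : Function.Injective l)
    (hl0 : ∀ i, l i ≠ 0) (hh : h ≠ 0) (hp : ∀ i, (p i).degree = μ i) {ρ : K[X]}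
    (hρ : ρ.degree < ↑(∑ i, (μ i + 1))) (h0 : ∀ i, aeval (twistedShift (l i) h) ρ (p i) = 0) :
    ρ = 0 := by
  by_contra hρ0
  have hdvd : ∏ i, (X - C (l i)) ^ (μ i + 1) ∣ ρ :=
    Finset.prod_dvd_of_coprime (fun i _ j _ hij ↦ (pairwise_coprime_X_sub_C hl hij).pow)
      fun i _ ↦ pow_dvd_of_aeval_twistedShift_apply_eq_zero (hl0 i) hh (hp i) hρ0 (h0 i)
  have hdeg : (∏ i, (X - C (l i)) ^ (μ i + 1)).degree = ↑(∑ i, (μ i + 1)) := by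
    simp [degree_prod, degree_pow]
  exact (degree_le_of_dvd hdvd hρ0).not_gt (hdeg ▸ hρ)

theorem exists_aeval_twistedShift_apply_eq (hl : Function.Injective l) (hl0 : ∀ i, l i ≠ 0)
    (hh : h ≠ 0) (hp : ∀ i, (p i).degree = μ i) (w : ι → K[X]) (hw : ∀ i, (w i).degree ≤ μ i) :
    ∃ ρ ∈ degreeLT K (∑ i, (μ i + 1)), ∀ i, aeval (twistedShift (l i) h) ρ (p i) = w i := by
  have hmem : ∀ i (ρ : K[X]), aeval (twistedShift (l i) h) ρ (p i) ∈ degreeLT K (μ i + 1) :=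
    fun i ρ ↦ mem_degreeLT.mpr <| (degree_aeval_twistedShift_apply_le _ _ _ _).trans_lt <| by
      rw [hp i]; exact_mod_cast Nat.lt_succ_self _
  let Φ : degreeLT K (∑ i, (μ i + 1)) →ₗ[K] ∀ i, degreeLT K (μ i + 1) :=
    LinearMap.pi fun i ↦ LinearMap.codRestrict _
      ((LinearMap.applyₗ (p i)).comp ((aeval (twistedShift (l i) h)).toLinearMap.comp
        (degreeLT K _).subtype)) fun ρ ↦ hmem i ρ
  have hinj : Function.Injective Φ := by
    rw [← LinearMap.ker_eq_bot, LinearMap.ker_eq_bot']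
    rintro ⟨ρ, hρ⟩ h0
    ext1
    exact eq_zero_of_aeval_twistedShift_apply_eq_zero hl hl0 hh hp (mem_degreeLT.mp hρ)
      fun i ↦ congrArg Subtype.val (congrFun h0 i)
  have hrank : Module.finrank K (degreeLT K (∑ i, (μ i + 1))) =
      Module.finrank K (∀ i, degreeLT K (μ i + 1)) := by
    simp [Module.finrank_pi_fintype, Module.finrank_eq_card_basis (degreeLT.basis K _)]
  obtain ⟨⟨ρ, hρ⟩, hΦ⟩ := (LinearMap.injective_iff_surjective_of_finrank_eq_finrank hrank).mp hinj
    fun i ↦ ⟨w i, mem_degreeLT.mpr <| (hw i).trans_lt <| by exact_mod_cast Nat.lt_succ_self _⟩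
  exact ⟨ρ, hρ, fun i ↦ congrArg Subtype.val (congrFun hΦ i)⟩

end Interpolation

end Polynomial

section ExpPolynomial

variable {c : ℂ}

theorem tendsto_pow_mul_cexp_atTop (hc : c.re < 0) (i : ℕ) :
    Tendsto (fun t : ℝ ↦ (t : ℂ) ^ i * Complex.exp (c * t)) atTop (𝓝 0) := by
  rw [tendsto_zero_iff_norm_tendsto_zero]
  refine (tendsto_rpow_mul_exp_neg_mul_atTop_nhds_zero i (-c.re) (by linarith)).congr' ?_
  filter_upwards [eventually_ge_atTop 0] with t ht
  simp [Complex.norm_exp, abs_of_nonneg ht]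

theorem tendsto_eval_mul_cexp_atTop (hc : c.re < 0) (q : ℂ[X]) :
    Tendsto (fun t : ℝ ↦ q.eval (t : ℂ) * Complex.exp (c * t)) atTop (𝓝 0) := by
  have := tendsto_finsetSum (Finset.range (q.natDegree + 1)) fun i _ ↦
    (tendsto_pow_mul_cexp_atTop hc i).const_mul (q.coeff i)
  simp only [mul_zero, Finset.sum_const_zero] at this
  refine this.congr fun t ↦ ?_
  simp only [eval_eq_sum_range, Finset.sum_mul, mul_assoc]

theorem integrableOn_eval_mul_cexp_Ioi (hc : c.re < 0) (q : ℂ[X]) (x : ℝ) :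
    IntegrableOn (fun t : ℝ ↦ q.eval (t : ℂ) * Complex.exp (c * t)) (Ioi x) := by
  have hcont : Continuous fun t : ℝ ↦ q.eval (t : ℂ) * Complex.exp (c * t) := by fun_prop
  -- `q(t) e^{ct} = (q(t) e^{ct/2}) e^{ct/2}`, where the first factor is bounded
  have hO : (fun t : ℝ ↦ q.eval (t : ℂ) * Complex.exp (c * t)) =O[atTop]
      fun t ↦ Real.exp (c.re / 2 * t) := by
    have hbdd := (tendsto_eval_mul_cexp_atTop (c := c / 2) (by simp; linarith) q).isBigO_one ℝ
    have hexp : (fun t : ℝ ↦ Complex.exp (c / 2 * t)) =O[atTop]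
        fun t ↦ Real.exp (c.re / 2 * t) :=
      Asymptotics.isBigO_of_le _ fun t ↦ by simp [Complex.norm_exp]
    refine ((hbdd.mul hexp).congr_left fun t ↦ ?_).congr_right fun t ↦ one_mul _
    rw [mul_assoc, ← Complex.exp_add]
    ring_nf
  refine (integrableOn_Ici_iff_integrableOn_Ioi (by finiteness)).mp <|
    (hcont.continuousOn.locallyIntegrableOn measurableSet_Ici).integrableOn_of_isBigO_atTop hO
      ⟨Ioi 0, Ioi_mem_atTop 0, integrableOn_exp_mul_Ioi (by linarith) 0⟩

theorem hasDerivAt_eval_mul_cexp (w : ℂ[X]) (t : ℝ) :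
    HasDerivAt (fun s : ℝ ↦ w.eval (s : ℂ) * Complex.exp (c * s))
      ((derivative w + C c * w).eval (t : ℂ) * Complex.exp (c * t)) t := by
  have hexp : HasDerivAt (fun z ↦ Complex.exp (c * z)) (Complex.exp (c * t) * c) (t : ℂ) := by
    simpa using ((hasDerivAt_id (t : ℂ)).const_mul c).cexp
  refine (((w.hasDerivAt (t : ℂ)).mul hexp).comp_ofReal).congr_deriv ?_
  simp only [eval_add, eval_mul, eval_C]
  ring

theorem integral_Ioi_eval_mul_cexp (hc : c.re < 0) {q w : ℂ[X]}
    (hw : derivative w + C c * w = q) (x : ℝ) :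
    ∫ t in Ioi x, q.eval (t : ℂ) * Complex.exp (c * t) =
      -(w.eval (x : ℂ) * Complex.exp (c * x)) := by
  subst hw
  rw [integral_Ioi_of_hasDerivAt_of_tendsto' (fun t _ ↦ hasDerivAt_eval_mul_cexp w t)
    (integrableOn_eval_mul_cexp_Ioi hc _ x) (tendsto_eval_mul_cexp_atTop hc w), zero_sub]

theorem eval_aeval_twistedShift_apply_mul_cexp (c h : ℂ) {n : ℕ} {ρ : ℂ[X]}
    (hρ : ρ ∈ degreeLT ℂ n) (q : ℂ[X]) (x : ℂ) :
    (aeval (twistedShift (Complex.exp (c * h)) h) ρ q).eval x * Complex.exp (c * x) =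
      ∑ j : Fin n, ρ.coeff j * (q.eval (x + j * h) * Complex.exp (c * (x + j * h))) := by
  rw [aeval_eq_sum_fin_of_mem_degreeLT hρ, LinearMap.sum_apply, eval_finsetSum, Finset.sum_mul]
  refine Finset.sum_congr rfl fun j _ ↦ ?_
  rw [LinearMap.smul_apply, twistedShift_pow_apply, eval_smul, eval_smul, taylor_eval,
    ← Complex.exp_nat_mul, smul_eq_mul, smul_eq_mul, mul_add, Complex.exp_add]
  ring_nf

end ExpPolynomial

theorem stmt_13_general (r : ℕ) (c : Fin r → ℂ)
    (hre : ∀ k, (c k).re < 0) (p : Fin r → Polynomial ℂ) (μ : Fin r → ℕ)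
    (hdeg : ∀ k, (p k).degree = (μ k : WithBot ℕ))
    (n : ℕ) (hn : n = ∑ k, (μ k + 1))
    (f : ℝ → ℂ) (hfdef : ∀ t : ℝ, f t = ∑ k, (p k).eval (t : ℂ) * Complex.exp (c k * t))
    (h : ℝ) (hh : 0 < h)
    (hexp : Function.Injective fun k => Complex.exp (c k * h)) :
    ∃ α : Fin n → ℂ, ∀ x : ℝ,
      (∫ t in Set.Ioi x, f t) = ∑ k : Fin n, α k * f (x + (k : ℕ) * h) := by
  subst hn
  choose w hw_deg hw using fun k ↦
    exists_derivative_add_C_mul_eq (c := c k) (fun h0 ↦ (hre k).ne (by simp [h0])) (p k)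
  obtain ⟨ρ, hρ_mem, hρ⟩ := exists_aeval_twistedShift_apply_eq hexp
    (fun k ↦ Complex.exp_ne_zero _) (Complex.ofReal_ne_zero.mpr hh.ne') hdeg (fun k ↦ -w k)
    fun k ↦ by rw [degree_neg, hw_deg, hdeg]
  refine ⟨fun j ↦ ρ.coeff j, fun x ↦ ?_⟩
  calc ∫ t in Ioi x, f t
      = ∑ k, -((w k).eval (x : ℂ) * Complex.exp (c k * x)) := by
        simp_rw [hfdef]
        rw [integral_finsetSum _ fun k _ ↦ integrableOn_eval_mul_cexp_Ioi (hre k) (p k) x]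
        exact Finset.sum_congr rfl fun k _ ↦ integral_Ioi_eval_mul_cexp (hre k) (hw k) x
    _ = ∑ k, ∑ j : Fin _, ρ.coeff j *
          ((p k).eval ↑(x + (j : ℕ) * h) * Complex.exp (c k * ↑(x + (j : ℕ) * h))) := by
        refine Finset.sum_congr rfl fun k _ ↦ ?_
        rw [← neg_mul, ← eval_neg, ← hρ k, eval_aeval_twistedShift_apply_mul_cexp _ _ hρ_mem]
        push_cast
        rfl
    _ = _ := by
        rw [Finset.sum_comm]
        simp_rw [hfdef, Finset.mul_sum]

theorem stmt_13 (r : ℕ) (hr : 1 ≤ r) (c : Fin r → ℂ) (hc : Function.Injective c)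
    (hre : ∀ k, (c k).re < 0) (p : Fin r → Polynomial ℂ) (μ : Fin r → ℕ)
    (hdeg : ∀ k, (p k).degree = (μ k : WithBot ℕ))
    (n : ℕ) (hn : n = ∑ k, (μ k + 1))
    (f : ℝ → ℂ) (hfdef : ∀ t : ℝ, f t = ∑ k, (p k).eval (t : ℂ) * Complex.exp (c k * t))
    (h : ℝ) (hh : 0 < h)
    (hexp : Function.Injective fun k => Complex.exp (c k * h)) :
    ∃ α : Fin n → ℂ, ∀ x : ℝ,
      (∫ t in Set.Ioi x, f t) = ∑ k : Fin n, α k * f (x + (k : ℕ) * h) :=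
  stmt_13_general r c hre p μ hdeg n hn f hfdef h hh hexp
end

section
/- Let r ≥ 1, let c_1, …, c_r be distinct complex numbers with Re c_k < 0, let p_1, …, p_r be complex polynomials with deg p_k = μ_k exactly, set n = Σ_{k=1}^r (μ_k + 1) and f(x) = Σ_{k=1}^r p_k(x) e^{c_k x}, and let h > 0 be such that e^{c_1 h}, …, e^{c_r h} are pairwise distinct. Fix reals a and x, and let F(y) = ∫_a^y f(t) dt. If the (n+1)×(n+1) determinant D with first row (1, 1, …, 1) and (m+1)-th row (f(x+(m−1)h), …, f(x+(m+n−1)h)) for 1 ≤ m ≤ n is nonzero, then G_n(x;h) = ∫_a^∞ f(t) dt, where G_n(x;h) = N/D and N is obtained from D by replacing its first row by (F(x), F(x+h), …, F(x+nh)). -/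
open MeasureTheory

/-- `DmatC f x h n` : the `(n+1)×(n+1)` complex matrix whose first row is `(1,…,1)`
and whose `(m+1)`-th row, for `1 ≤ m ≤ n`, is
`(f (x+(m-1)h), f (x+mh), …, f (x+(m+n-1)h))`. -/
noncomputable def DmatC (f : ℝ → ℂ) (x h : ℝ) (n : ℕ) : Matrix (Fin (n + 1)) (Fin (n + 1)) ℂ :=
  Matrix.of fun m k =>
    if (m : ℕ) = 0 then 1 else f (x + (((m : ℕ) - 1 + (k : ℕ) : ℕ) : ℝ) * h)

/-- `NmatC f F x h n` : the matrix obtained from `DmatC f x h n` by replacing its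
first row by `(F x, F (x+h), …, F (x+nh))`. -/
noncomputable def NmatC (f F : ℝ → ℂ) (x h : ℝ) (n : ℕ) : Matrix (Fin (n + 1)) (Fin (n + 1)) ℂ :=
  Matrix.of fun m k =>
    if (m : ℕ) = 0 then F (x + ((k : ℕ) : ℝ) * h)
    else f (x + (((m : ℕ) - 1 + (k : ℕ) : ℕ) : ℝ) * h)

/-!
Put `λₖ = exp (cₖ h)` and `P = ∏ₖ (X - λₖ) ^ (μₖ + 1)`, a monic polynomial of degree `n`.
The shift recurrence `∑ⱼ P.coeff j * u (s + j h) = 0` holds for every term `pₖ(t) e^{cₖ t}`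
of `f`: expanding `pₖ(s + j h)` in powers of `j` reduces it to `(X d/dX)^i P (λₖ) = 0` for
`i ≤ μₖ`, true because `λₖ` is a root of `P` of multiplicity `μₖ + 1`. Integrating, the tail
`g y = ∫_y^∞ f` satisfies the same recurrence. Since `F = ∫_a^∞ f - g`, the first row of the
numerator matrix is `(∫_a^∞ f) • (1, …, 1) - (g (x + k h))ₖ`, and the determinant with first
row `(g (x + k h))ₖ` vanishes because the coefficient vector of `P` lies in its kernel.
-/

open Polynomial Filter Set Asymptotics

section EulerDeriv

variable {R : Type*} [CommRing R]

noncomputable def eulerDeriv (Q : R[X]) : R[X] := X * derivative Q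

lemma coeff_eulerDeriv (Q : R[X]) (j : ℕ) : (eulerDeriv Q).coeff j = j * Q.coeff j := by
  cases j with
  | zero => simp [eulerDeriv]
  | succ j => rw [eulerDeriv, coeff_X_mul, coeff_derivative]; push_cast; ring

lemma coeff_iterate_eulerDeriv (i : ℕ) (Q : R[X]) (j : ℕ) :
    (eulerDeriv^[i] Q).coeff j = (j : R) ^ i * Q.coeff j := by
  induction i generalizing Q with
  | zero => simp
  | succ i ih => rw [Function.iterate_succ_apply, ih, coeff_eulerDeriv]; ring

lemma natDegree_iterate_eulerDeriv_le (i : ℕ) (Q : R[X]) :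
    (eulerDeriv^[i] Q).natDegree ≤ Q.natDegree :=
  natDegree_le_iff_coeff_eq_zero.2 fun j hj => by
    rw [coeff_iterate_eulerDeriv, coeff_eq_zero_of_natDegree_lt hj, mul_zero]

lemma pow_dvd_eulerDeriv {a : R} {m : ℕ} {Q : R[X]} (hQ : (X - C a) ^ (m + 1) ∣ Q) :
    (X - C a) ^ m ∣ eulerDeriv Q := by
  obtain ⟨S, rfl⟩ := hQ
  rw [eulerDeriv, derivative_mul, derivative_pow, derivative_X_sub_C, mul_one,
    Nat.add_sub_cancel]
  exact (dvd_add ((dvd_mul_left _ _).mul_right S)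
    ((pow_dvd_pow _ m.le_succ).mul_right _)).mul_left X

lemma pow_dvd_iterate_eulerDeriv {a : R} {m : ℕ} (i : ℕ) {Q : R[X]}
    (hQ : (X - C a) ^ (m + i) ∣ Q) : (X - C a) ^ m ∣ eulerDeriv^[i] Q := by
  induction i generalizing Q with
  | zero => exact hQ
  | succ i ih => exact ih (pow_dvd_eulerDeriv (by rwa [← add_assoc] at hQ))

lemma sum_coeff_mul_pow_mul_pow_eq_zero {a : R} {μ i N : ℕ} {P : R[X]}
    (hP : (X - C a) ^ (μ + 1) ∣ P) (hi : i ≤ μ) (hN : P.natDegree < N) :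
    ∑ j ∈ Finset.range N, P.coeff j * (j : R) ^ i * a ^ j = 0 := by
  have hroot : (eulerDeriv^[i] P).IsRoot a := dvd_iff_isRoot.mp <|
    pow_one (X - C a) ▸ pow_dvd_iterate_eulerDeriv i
      ((pow_dvd_pow _ (by omega)).trans hP)
  rw [IsRoot.def, eval_eq_sum_range' ((natDegree_iterate_eulerDeriv_le i P).trans_lt hN)]
    at hroot
  rw [← hroot]
  exact Finset.sum_congr rfl fun j _ => by rw [coeff_iterate_eulerDeriv]; ring

lemma sum_coeff_mul_eval_mul_pow_eq_zero {a : R} {μ N : ℕ} {P q : R[X]}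
    (hP : (X - C a) ^ (μ + 1) ∣ P) (hq : q.natDegree ≤ μ) (hN : P.natDegree < N) :
    ∑ j ∈ Finset.range N, P.coeff j * q.eval (j : R) * a ^ j = 0 := by
  simp_rw [eval_eq_sum_range' (Nat.lt_succ_of_le hq), Finset.mul_sum, Finset.sum_mul]
  rw [Finset.sum_comm]
  refine Finset.sum_eq_zero fun i hi => ?_
  rw [← mul_zero (q.coeff i), ← sum_coeff_mul_pow_mul_pow_eq_zero hP
    (Nat.lt_succ_iff.mp (Finset.mem_range.mp hi)) hN, Finset.mul_sum]
  exact Finset.sum_congr rfl fun j _ => by ring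

end EulerDeriv

lemma isBigO_eval_ofReal_exp_atTop (p : ℂ[X]) {ε : ℝ} (hε : 0 < ε) :
    (fun t : ℝ => p.eval (t : ℂ)) =O[atTop] fun t => Real.exp (ε * t) := by
  simp_rw [eval_eq_sum_range]
  refine IsBigO.fun_sum fun i _ => ?_
  refine IsBigO.const_mul_left ((isBigO_of_le _ fun t => ?_).trans
    (isLittleO_pow_exp_pos_mul_atTop i hε).isBigO) _
  simp

lemma integrableOn_Ioi_eval_mul_cexp (p : ℂ[X]) {c : ℂ} (hc : c.re < 0) (b : ℝ) :
    IntegrableOn (fun t : ℝ => p.eval (t : ℂ) * Complex.exp (c * t)) (Ioi b) := by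
  have hcont : Continuous fun t : ℝ => p.eval (t : ℂ) * Complex.exp (c * t) := by fun_prop
  have hO : (fun t : ℝ => p.eval (t : ℂ) * Complex.exp (c * t)) =O[atTop]
      fun t => Real.exp (-(-c.re / 2) * t) := by
    refine ((isBigO_eval_ofReal_exp_atTop p (by linarith : 0 < -c.re / 2)).mul
      (isBigO_of_le _ fun t => ?_ : _ =O[atTop] fun t : ℝ => Real.exp (c.re * t))).congr_right
      fun t => by rw [← Real.exp_add]; ring_nf
    simp [Complex.norm_exp]
  exact (integrableOn_Ici_iff_integrableOn_Ioi).mp <|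
    (hcont.continuousOn.locallyIntegrableOn measurableSet_Ici).integrableOn_of_isBigO_atTop hO
      ⟨Ioi b, Ioi_mem_atTop b, exp_neg_integrableOn_Ioi b (by linarith)⟩

section Shift

variable {E : Type*} [NormedAddCommGroup E]

lemma setIntegral_Ioi_comp_add_right [NormedSpace ℝ E] (u : ℝ → E) (s d : ℝ) :
    ∫ t in Ioi s, u (t + d) = ∫ t in Ioi (s + d), u t := by
  simpa [preimage_add_const_Ioi] using
    (measurePreserving_add_right volume d).setIntegral_preimage_emb
      (measurableEmbedding_addRight d) u (Ioi (s + d))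

lemma MeasureTheory.IntegrableOn.comp_add_right_Ioi {u : ℝ → E} {s d : ℝ}
    (hu : IntegrableOn u (Ioi (s + d))) : IntegrableOn (fun t => u (t + d)) (Ioi s) := by
  simpa [preimage_add_const_Ioi, Function.comp_def] using
    ((measurePreserving_add_right volume d).integrableOn_comp_preimage
      (measurableEmbedding_addRight d)).mpr hu

end Shift

def SatisfiesShiftRecurrence {N : ℕ} (w : Fin N → ℂ) (h : ℝ) (u : ℝ → ℂ) : Prop :=
  ∀ s : ℝ, ∑ j : Fin N, w j * u (s + (j : ℕ) * h) = 0

namespace SatisfiesShiftRecurrence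

variable {N : ℕ} {w : Fin N → ℂ} {h : ℝ}

lemma fun_sum {ι : Type*} (S : Finset ι) {u : ι → ℝ → ℂ}
    (hu : ∀ i ∈ S, SatisfiesShiftRecurrence w h (u i)) :
    SatisfiesShiftRecurrence w h fun t => ∑ i ∈ S, u i t := by
  intro s
  simp_rw [Finset.mul_sum]
  rw [Finset.sum_comm]
  exact Finset.sum_eq_zero fun i hi => hu i hi s

lemma integral_Ioi {u : ℝ → ℂ} (hu : SatisfiesShiftRecurrence w h u)
    (hint : ∀ b, IntegrableOn u (Ioi b)) :
    SatisfiesShiftRecurrence w h fun t => ∫ s in Ioi t, u s := by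
  intro s
  calc ∑ j : Fin N, w j * ∫ t in Ioi (s + (j : ℕ) * h), u t
      = ∑ j : Fin N, ∫ t in Ioi s, w j * u (t + (j : ℕ) * h) := by
        simp_rw [← setIntegral_Ioi_comp_add_right, integral_const_mul]
    _ = ∫ t in Ioi s, ∑ j : Fin N, w j * u (t + (j : ℕ) * h) :=
        (integral_finsetSum _ fun (j : Fin N) _ =>
          ((hint (s + (j : ℕ) * h)).comp_add_right_Ioi).const_mul _).symm
    _ = 0 := by simp only [hu _, integral_zero]

end SatisfiesShiftRecurrence

lemma satisfiesShiftRecurrence_eval_mul_cexp {p P : ℂ[X]} {c : ℂ} {μ n : ℕ} {h : ℝ}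
    (hp : p.natDegree ≤ μ) (hP : (X - C (Complex.exp (c * h))) ^ (μ + 1) ∣ P)
    (hPn : P.natDegree ≤ n) :
    SatisfiesShiftRecurrence (fun j : Fin (n + 1) => P.coeff j) h
      fun t => p.eval (t : ℂ) * Complex.exp (c * t) := by
  intro s
  set q := p.comp (C (h : ℂ) * X + C (s : ℂ))
  have hq : q.natDegree ≤ μ := natDegree_comp_le.trans <|
    (Nat.mul_le_mul hp natDegree_linear_le).trans_eq (mul_one μ)
  have hterm : ∀ j : ℕ,
      P.coeff j * (p.eval ((s + j * h : ℝ) : ℂ) * Complex.exp (c * (s + j * h : ℝ)))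
      = Complex.exp (c * s) * (P.coeff j * q.eval (j : ℂ) * Complex.exp (c * h) ^ j) := by
    intro j
    rw [← Complex.exp_nat_mul, eval_comp]
    simp only [eval_add, eval_mul, eval_C, eval_X]
    have hpt : ((s + j * h : ℝ) : ℂ) = h * j + s := by push_cast; ring
    rw [hpt, show c * (h * j + s) = c * s + j * (c * h) by ring, Complex.exp_add]
    ring
  rw [Fin.sum_univ_eq_sum_range (fun j => P.coeff j * (p.eval ((s + j * h : ℝ) : ℂ) *
    Complex.exp (c * (s + j * h : ℝ))))]
  simp_rw [hterm, ← Finset.mul_sum,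
    sum_coeff_mul_eval_mul_pow_eq_zero hP hq (Nat.lt_succ_of_le hPn), mul_zero]

section Determinants

variable {f : ℝ → ℂ} {x h : ℝ} {n : ℕ}

lemma NmatC_eq_updateRow (F : ℝ → ℂ) :
    NmatC f F x h n = (DmatC f x h n).updateRow 0 fun k => F (x + (k : ℕ) * h) := by
  ext m k
  rcases eq_or_ne m 0 with rfl | hm
  · simp [NmatC]
  · simp [NmatC, DmatC, hm, Fin.val_eq_zero_iff]

lemma DmatC_updateRow_zero_one : (DmatC f x h n).updateRow 0 (fun _ => 1) = DmatC f x h n :=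
  Matrix.updateRow_eq_self _ 0

lemma det_updateRow_DmatC_eq_zero {g : ℝ → ℂ} {w : Fin (n + 1) → ℂ} (hw : w ≠ 0)
    (hf : SatisfiesShiftRecurrence w h f) (hg : SatisfiesShiftRecurrence w h g) :
    ((DmatC f x h n).updateRow 0 fun k => g (x + (k : ℕ) * h)).det = 0 := by
  refine Matrix.exists_mulVec_eq_zero_iff.mp ⟨w, hw, funext fun m => ?_⟩
  rcases eq_or_ne m 0 with rfl | hm
  · simpa [Matrix.mulVec, dotProduct, mul_comm] using hg x
  · have hm' : (m : ℕ) ≠ 0 := Fin.val_ne_zero_iff.mpr hm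
    rw [Matrix.mulVec, dotProduct, Pi.zero_apply, ← hf (x + ((m : ℕ) - 1 : ℕ) * h)]
    refine Finset.sum_congr rfl fun k _ => ?_
    simp only [Matrix.updateRow_ne hm, DmatC, Matrix.of_apply, if_neg hm']
    push_cast
    ring_nf

lemma det_NmatC_eq_mul_det_DmatC {F g : ℝ → ℂ} {w : Fin (n + 1) → ℂ} (I : ℂ)
    (hw : w ≠ 0) (hf : SatisfiesShiftRecurrence w h f) (hg : SatisfiesShiftRecurrence w h g)
    (hF : ∀ y, F y = I - g y) :
    (NmatC f F x h n).det = I * (DmatC f x h n).det := by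
  have hrow : (fun k : Fin (n + 1) => F (x + (k : ℕ) * h)) =
      I • (fun _ => (1 : ℂ)) + (-1 : ℂ) • fun k : Fin (n + 1) => g (x + (k : ℕ) * h) := by
    funext k
    simp [hF, sub_eq_add_neg]
  rw [NmatC_eq_updateRow, hrow, Matrix.det_updateRow_add, Matrix.det_updateRow_smul,
    Matrix.det_updateRow_smul, DmatC_updateRow_zero_one, det_updateRow_DmatC_eq_zero hw hf hg,
    mul_zero, add_zero]

end Determinants

theorem stmt_14_general (r : ℕ) (c : Fin r → ℂ)
    (hre : ∀ k, (c k).re < 0) (p : Fin r → Polynomial ℂ) (μ : Fin r → ℕ)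
    (hdeg : ∀ k, (p k).degree = (μ k : WithBot ℕ))
    (n : ℕ) (hn : n = ∑ k, (μ k + 1))
    (f : ℝ → ℂ) (hfdef : ∀ t : ℝ, f t = ∑ k, (p k).eval (t : ℂ) * Complex.exp (c k * t))
    (h : ℝ)
    (a x : ℝ) (F : ℝ → ℂ) (hF : ∀ y, F y = ∫ t in a..y, f t)
    (hD : (DmatC f x h n).det ≠ 0) :
    (NmatC f F x h n).det / (DmatC f x h n).det = ∫ t in Set.Ioi a, f t := by
  set P : ℂ[X] := ∏ k, (X - C (Complex.exp (c k * h))) ^ (μ k + 1)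
  have hPmonic : P.Monic := monic_prod_of_monic _ _ fun k _ => (monic_X_sub_C _).pow _
  have hPdeg : P.natDegree = n := by
    rw [natDegree_prod _ _ fun k _ => pow_ne_zero _ (X_sub_C_ne_zero _), hn]
    simp [natDegree_pow]
  have hw : (fun j : Fin (n + 1) => P.coeff j) ≠ 0 := fun h0 => by
    simpa [← hPdeg, hPmonic.coeff_natDegree] using congr_fun h0 (Fin.last n)
  have hf : f = fun t : ℝ => ∑ k, (p k).eval (t : ℂ) * Complex.exp (c k * t) := funext hfdef
  have hint (b : ℝ) : IntegrableOn f (Ioi b) := hf ▸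
    integrable_finsetSum _ fun k _ => integrableOn_Ioi_eval_mul_cexp (p k) (hre k) b
  have hrec : SatisfiesShiftRecurrence (fun j : Fin (n + 1) => P.coeff j) h f := hf ▸
    .fun_sum _ fun k _ => satisfiesShiftRecurrence_eval_mul_cexp
      (natDegree_eq_of_degree_eq_some (hdeg k)).le (Finset.dvd_prod_of_mem _ (Finset.mem_univ k))
      hPdeg.le
  rw [det_NmatC_eq_mul_det_DmatC (∫ t in Ioi a, f t) hw hrec (hrec.integral_Ioi hint)
    fun y => (hF y).trans (intervalIntegral.integral_Ioi_sub_Ioi' (hint a) (hint y)).symm,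
    mul_div_cancel_right₀ _ hD]

theorem stmt_14 (r : ℕ) (hr : 1 ≤ r) (c : Fin r → ℂ) (hc : Function.Injective c)
    (hre : ∀ k, (c k).re < 0) (p : Fin r → Polynomial ℂ) (μ : Fin r → ℕ)
    (hdeg : ∀ k, (p k).degree = (μ k : WithBot ℕ))
    (n : ℕ) (hn : n = ∑ k, (μ k + 1))
    (f : ℝ → ℂ) (hfdef : ∀ t : ℝ, f t = ∑ k, (p k).eval (t : ℂ) * Complex.exp (c k * t))
    (h : ℝ) (hh : 0 < h)
    (hexp : Function.Injective fun k => Complex.exp (c k * h))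
    (a x : ℝ) (F : ℝ → ℂ) (hF : ∀ y, F y = ∫ t in a..y, f t)
    (hD : (DmatC f x h n).det ≠ 0) :
    (NmatC f F x h n).det / (DmatC f x h n).det = ∫ t in Set.Ioi a, f t :=
  stmt_14_general r c hre p μ hdeg n hn f hfdef h a x F hF hD
end
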